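/- arXiv:2009.05729 — 3 statements merged into one kernel-verified Lean document; each statement's English description precedes it below -/
import Mathlib

section
/- Let f : ℝ → ℝ be of bounded variation. Then the uncentered Hardy–Littlewood maximal function M̃f satisfies lim_{x→∞} M̃f(x) = lim_{x→−∞} M̃f(x) = max{ lim_{x→∞} |f|(x), lim_{x→−∞} |f|(x) }. -/
open MeasureTheory Filter Set Topology

/-- Average of |f| over the interval (a,b). -/
noncomputable def mAvg (f : ℝ → ℝ) (a b : ℝ) : ℝ := (∫ t in a..b, |f t|) / (b - a)

/-- Uncentered Hardy–Littlewood maximal function. -/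
noncomputable def uMax (f : ℝ → ℝ) (x : ℝ) : ℝ :=
  sSup {y | ∃ a b : ℝ, a < b ∧ a ≤ x ∧ x ≤ b ∧ y = mAvg f a b}

/-- f has bounded variation on ℝ. -/
def BVfun (f : ℝ → ℝ) : Prop := BoundedVariationOn f Set.univ

/-- Total variation of f over a set, as a real number. -/
noncomputable def varOn (f : ℝ → ℝ) (s : Set ℝ) : ℝ := (eVariationOn f s).toReal

/-- BV norm: |f(-∞)| + Var(f). -/
noncomputable def bvNorm (f : ℝ → ℝ) : ℝ :=
  |limUnder Filter.atBot f| + varOn f Set.univ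

/-- Upper precise representative: limsup over intervals I ∋ x with |I| → 0 of averages of |f|. -/
noncomputable def ubar (f : ℝ → ℝ) (x : ℝ) : ℝ :=
  ⨅ h : {h : ℝ // 0 < h},
    sSup {y | ∃ a b : ℝ, a < b ∧ a ≤ x ∧ x ≤ b ∧ b - a ≤ h.1 ∧ y = mAvg f a b}

/-- The open "interval" (a,b) in ℝ with extended-real endpoints. -/
noncomputable def erealIoo (a b : EReal) : Set ℝ := {x : ℝ | a < (x : EReal) ∧ (x : EReal) < b}

/-- Value of g at an extended-real point, understood as a limit at ±∞. -/
noncomputable def valAt (g : ℝ → ℝ) (a : EReal) : ℝ :=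
  if a = ⊥ then limUnder Filter.atBot g
  else if a = ⊤ then limUnder Filter.atTop g
  else g a.toReal

/-! `uMax f ≥ max cp cm` everywhere, because the averages of `|f|` over `[x, x + T]` and
`[x - T, x]` tend to `cp` and `cm` as `T → ∞`. Conversely, let `c > max cp cm` and let `S` be a
compact set off which `|f| ≤ c`. An interval containing `x` either misses `S`, and then the average
over it is at most `c`, or meets `S` and so has length at least `dist x S`; then the average is at
most `c + (∫_S |f|) / dist x S`, which tends to `c` as `|x| → ∞`. -/

section

variable {f : ℝ → ℝ} {M a b c d x N : ℝ}

lemma integrableOn_abs_of_abs_le (hmeas : Measurable f) (hM : ∀ t, |f t| ≤ M) {s : Set ℝ}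
    (hs : volume s ≠ ⊤) : IntegrableOn (fun t => |f t|) s :=
  Measure.integrableOn_of_bounded hs hmeas.abs.aestronglyMeasurable
    (ae_of_all _ fun t => by simpa only [Real.norm_eq_abs, abs_abs] using hM t)

lemma intervalIntegrable_abs_of_abs_le (hmeas : Measurable f) (hM : ∀ t, |f t| ≤ M) (a b : ℝ) :
    IntervalIntegrable (fun t => |f t|) volume a b :=
  (integrableOn_abs_of_abs_le hmeas hM measure_Icc_lt_top.ne).intervalIntegrable

lemma mAvg_le_of_forall_le (hmeas : Measurable f) (hM : ∀ t, |f t| ≤ M) (hab : a < b)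
    (h : ∀ t ∈ Icc a b, |f t| ≤ c) : mAvg f a b ≤ c := by
  rw [mAvg, div_le_iff₀ (sub_pos.2 hab)]
  calc ∫ t in a..b, |f t| ≤ ∫ _ in a..b, c :=
        intervalIntegral.integral_mono_on hab.le (intervalIntegrable_abs_of_abs_le hmeas hM a b)
          intervalIntegrable_const h
    _ = c * (b - a) := by simp [mul_comm]

lemma uMax_le (h : ∀ a b, a < b → a ≤ x → x ≤ b → mAvg f a b ≤ c) : uMax f x ≤ c :=
  csSup_le ⟨_, x - 1, x + 1, by linarith, by linarith, by linarith, rfl⟩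
    fun _ ⟨a, b, hab, hax, hxb, hy⟩ => hy ▸ h a b hab hax hxb

lemma le_uMax (hmeas : Measurable f) (hM : ∀ t, |f t| ≤ M) (hab : a < b) (hax : a ≤ x)
    (hxb : x ≤ b) : mAvg f a b ≤ uMax f x :=
  le_csSup
    ⟨M, fun _ ⟨_, _, hab, _, _, hy⟩ => hy ▸ mAvg_le_of_forall_le hmeas hM hab fun t _ => hM t⟩
    ⟨a, b, hab, hax, hxb, rfl⟩

lemma le_uMax_of_forall_ge_le (hmeas : Measurable f) (hM : ∀ t, |f t| ≤ M)
    (hd : ∀ t ≥ N, d ≤ |f t|) (x : ℝ) : d ≤ uMax f x := by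
  set u := max N x
  have hI := intervalIntegrable_abs_of_abs_le hmeas hM
  have hbound : ∀ T > u - x, d * (1 - (u - x) / T) ≤ uMax f x := by
    intro T hT
    have hT0 : 0 < T := (sub_nonneg.2 (le_max_right N x)).trans_lt hT
    have hux : u ≤ x + T := by linarith
    have hhead : 0 ≤ ∫ t in x..u, |f t| :=
      intervalIntegral.integral_nonneg (le_max_right N x) fun _ _ => abs_nonneg _
    have htail : d * (x + T - u) ≤ ∫ t in u..x + T, |f t| :=
      calc d * (x + T - u) = ∫ _ in u..x + T, d := by simp [mul_comm]
        _ ≤ ∫ t in u..x + T, |f t| := intervalIntegral.integral_mono_on hux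
            intervalIntegrable_const (hI _ _) fun t ht => hd t ((le_max_left N x).trans ht.1)
    calc d * (1 - (u - x) / T) = d * (x + T - u) / T := by field_simp; ring
      _ ≤ mAvg f x (x + T) := by
          rw [mAvg, add_sub_cancel_left,
            ← intervalIntegral.integral_add_adjacent_intervals (hI x u) (hI u (x + T))]
          gcongr
          linarith
      _ ≤ uMax f x := le_uMax hmeas hM (by linarith) le_rfl (by linarith)
  have hlim : Tendsto (fun T => d * (1 - (u - x) / T)) atTop (𝓝 d) := by
    simpa using ((tendsto_const_nhds.div_atTop tendsto_id).const_sub 1).const_mul d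
  exact le_of_tendsto hlim ((eventually_gt_atTop (u - x)).mono hbound)

lemma le_uMax_of_tendsto_atTop (hmeas : Measurable f) (hM : ∀ t, |f t| ≤ M)
    (hp : Tendsto (fun t => |f t|) atTop (𝓝 c)) (x : ℝ) : c ≤ uMax f x :=
  le_of_forall_lt_imp_le_of_dense fun d hd => by
    obtain ⟨N, hN⟩ := eventually_atTop.1 (hp.eventually_const_le hd)
    exact le_uMax_of_forall_ge_le hmeas hM hN x

lemma mAvg_comp_neg (f : ℝ → ℝ) (a b : ℝ) : mAvg (fun t => f (-t)) a b = mAvg f (-b) (-a) := by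
  rw [mAvg, mAvg, intervalIntegral.integral_comp_neg fun t => |f t|, neg_sub_neg]

lemma uMax_comp_neg (f : ℝ → ℝ) (x : ℝ) : uMax (fun t => f (-t)) x = uMax f (-x) := by
  rw [uMax, uMax]
  congr 1
  ext y
  constructor
  · rintro ⟨a, b, hab, hax, hxb, rfl⟩
    exact ⟨-b, -a, by linarith, by linarith, by linarith, mAvg_comp_neg f a b⟩
  · rintro ⟨a, b, hab, hax, hxb, rfl⟩
    refine ⟨-b, -a, by linarith, by linarith, by linarith, ?_⟩
    rw [mAvg_comp_neg, neg_neg, neg_neg]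

lemma le_uMax_of_tendsto_atBot (hmeas : Measurable f) (hM : ∀ t, |f t| ≤ M)
    (hm : Tendsto (fun t => |f t|) atBot (𝓝 c)) (x : ℝ) : c ≤ uMax f x := by
  have := le_uMax_of_tendsto_atTop (f := fun t => f (-t)) (hmeas.comp measurable_neg)
    (fun t => hM (-t)) (hm.comp tendsto_neg_atTop_atBot) (-x)
  rwa [uMax_comp_neg, neg_neg] at this

lemma integral_abs_le_of_abs_le_off (hmeas : Measurable f) (hM : ∀ t, |f t| ≤ M) {S : Set ℝ}
    (hS : IsCompact S) (hc : 0 ≤ c) (hoff : ∀ t ∉ S, |f t| ≤ c) (hab : a ≤ b) :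
    ∫ t in a..b, |f t| ≤ c * (b - a) + ∫ t in S, |f t| := by
  have hind : Integrable (S.indicator fun t => |f t|) :=
    (integrableOn_abs_of_abs_le hmeas hM hS.measure_lt_top.ne).integrable_indicator
      hS.measurableSet
  calc ∫ t in a..b, |f t| ≤ ∫ t in a..b, (c + S.indicator (fun t => |f t|) t) := by
        refine intervalIntegral.integral_mono_on hab
          (intervalIntegrable_abs_of_abs_le hmeas hM a b)
          (intervalIntegrable_const.add hind.intervalIntegrable) fun t _ => ?_
        by_cases ht : t ∈ S <;> simp [ht, hc, hoff]
    _ = c * (b - a) + ∫ t in Ioc a b, S.indicator (fun t => |f t|) t := by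
        rw [intervalIntegral.integral_add intervalIntegrable_const hind.intervalIntegrable,
          intervalIntegral.integral_const, smul_eq_mul, mul_comm,
          intervalIntegral.integral_of_le hab]
    _ ≤ c * (b - a) + ∫ t in S, |f t| := by
        rw [← integral_indicator hS.measurableSet]
        exact add_le_add_right (setIntegral_le_integral hind
          (ae_of_all _ fun t => indicator_nonneg (fun _ _ => abs_nonneg _) t)) _

lemma uMax_le_of_abs_le_off (hmeas : Measurable f) (hM : ∀ t, |f t| ≤ M) {S : Set ℝ}
    (hS : IsCompact S) (hc : 0 ≤ c) (hoff : ∀ t ∉ S, |f t| ≤ c) {R : ℝ} (hR : 0 < R)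
    (hfar : ∀ s ∈ S, R ≤ dist x s) : uMax f x ≤ c + (∫ t in S, |f t|) / R := by
  have hK : 0 ≤ ∫ t in S, |f t| := integral_nonneg fun _ => abs_nonneg _
  refine uMax_le fun a b hab hax hxb => ?_
  by_cases hmeet : ∃ s ∈ S, s ∈ Icc a b
  · obtain ⟨s, hsS, hs⟩ := hmeet
    have hRab : R ≤ b - a := (hfar s hsS).trans (Real.dist_le_of_mem_Icc ⟨hax, hxb⟩ hs)
    rw [mAvg, div_le_iff₀ (sub_pos.2 hab), add_mul]
    refine (integral_abs_le_of_abs_le_off hmeas hM hS hc hoff hab.le).trans ?_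
    gcongr
    rw [div_mul_eq_mul_div, le_div_iff₀ hR]
    exact mul_le_mul_of_nonneg_left hRab hK
  · push Not at hmeet
    exact (mAvg_le_of_forall_le hmeas hM hab fun t ht => hoff t fun htS => hmeet t htS ht).trans
      (le_add_of_nonneg_right (div_nonneg hK hR.le))

lemma eventually_uMax_lt_of_eventually_abs_le (hmeas : Measurable f) (hM : ∀ t, |f t| ≤ M)
    (hc : 0 ≤ c) (hoff : ∀ᶠ t in cocompact ℝ, |f t| ≤ c) (hcd : c < d) :
    ∀ᶠ x in cocompact ℝ, uMax f x < d := by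
  obtain ⟨S, hS, hoff⟩ := hasBasis_cocompact.eventually_iff.1 hoff
  set K := ∫ t in S, |f t|
  have hK : 0 ≤ K := integral_nonneg fun _ => abs_nonneg _
  set R := K / (d - c) + 1
  have hR : 0 < R := by positivity
  have hKR : K / R < d - c := by
    rw [div_lt_iff₀ hR, mul_add, mul_div_cancel₀ _ (sub_pos.2 hcd).ne']
    linarith
  filter_upwards [(hS.cthickening (r := R)).compl_mem_cocompact] with x hx
  have hfar : ∀ s ∈ S, R ≤ dist x s := fun s hs =>
    le_of_not_ge fun h => hx (Metric.mem_cthickening_of_dist_le x s R S hs h)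
  linarith [uMax_le_of_abs_le_off hmeas hM hS hc hoff hR hfar]

theorem tendsto_uMax_cocompact (hmeas : Measurable f) (hM : ∀ t, |f t| ≤ M) {cp cm : ℝ}
    (hp : Tendsto (fun t => |f t|) atTop (𝓝 cp)) (hm : Tendsto (fun t => |f t|) atBot (𝓝 cm)) :
    Tendsto (uMax f) (cocompact ℝ) (𝓝 (max cp cm)) := by
  have hlow : ∀ x, max cp cm ≤ uMax f x := fun x =>
    max_le (le_uMax_of_tendsto_atTop hmeas hM hp x) (le_uMax_of_tendsto_atBot hmeas hM hm x)
  refine tendsto_order.2 ⟨fun d hd => .of_forall fun x => hd.trans_le (hlow x), fun d hd => ?_⟩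
  obtain ⟨c, hLc, hcd⟩ := exists_between hd
  have hc : 0 ≤ c := by
    linarith [ge_of_tendsto' hp fun _ => abs_nonneg _, le_max_left cp cm]
  have hoff : ∀ᶠ t in cocompact ℝ, |f t| ≤ c := by
    rw [cocompact_eq_atBot_atTop, eventually_sup]
    exact ⟨hm.eventually_le_const ((le_max_right _ _).trans_lt hLc),
      hp.eventually_le_const ((le_max_left _ _).trans_lt hLc)⟩
  exact eventually_uMax_lt_of_eventually_abs_le hmeas hM hc hoff hcd

lemma BVfun.measurable (hf : BVfun f) : Measurable f := by
  obtain ⟨p, q, hp, hq, rfl⟩ :=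
    hf.locallyBoundedVariationOn.exists_monotoneOn_sub_monotoneOn
  exact (monotoneOn_univ.1 hp).measurable.sub (monotoneOn_univ.1 hq).measurable

lemma BVfun.abs_le (hf : BVfun f) (t : ℝ) : |f t| ≤ |f 0| + varOn f univ :=
  calc |f t| ≤ |f 0| + |f t - f 0| := by linarith [abs_sub_abs_le_abs_sub (f t) (f 0)]
    _ ≤ |f 0| + varOn f univ := by
        gcongr
        exact hf.dist_le (mem_univ t) (mem_univ 0)

end

theorem stmt0 (f : ℝ → ℝ) (hf : BVfun f) (cp cm : ℝ)
    (hp : Tendsto (fun x => |f x|) atTop (𝓝 cp))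
    (hm : Tendsto (fun x => |f x|) atBot (𝓝 cm)) :
    Tendsto (uMax f) atTop (𝓝 (max cp cm)) ∧
    Tendsto (uMax f) atBot (𝓝 (max cp cm)) := by
  have h := tendsto_uMax_cocompact hf.measurable hf.abs_le hp hm
  exact ⟨h.mono_left atTop_le_cocompact, h.mono_left atBot_le_cocompact⟩
end

section
/- Let f ∈ BV(ℝ) and let (f_j) ⊂ BV(ℝ) with ‖f_j − f‖_{BV} → 0. Then for any −∞ ≤ a < b ≤ ∞, Var_{(a,b)}(|f_j|) → Var_{(a,b)}(|f|). In other words, the map f ↦ Var_{(a,b)}(|f|) is continuous from BV(ℝ) to [0,∞). -/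
open MeasureTheory Filter Set Topology

/-!
Since `fⱼ → f` uniformly, lower semicontinuity of the variation under pointwise convergence gives
`Var |f| ≤ liminf Var |fⱼ|`. For the upper bound let `ε ≥ sup |fⱼ - f|` and let `S` shrink every
value towards `0` by `ε`. At any two points, the increment of `|fⱼ|` plus that of `S ∘ f` is at
most the sum of the increments of `|f|`, `fⱼ - f` and `f`; summing along a common partition,
`Var |fⱼ| + Var (S ∘ f) ≤ Var |f| + Var (fⱼ - f) + Var f`. As `ε → 0`, `Var (S ∘ f) → Var f`
(lower semicontinuity again, `S` being `1`-Lipschitz) and `Var (fⱼ - f) → 0`, whence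
`limsup Var |fⱼ| ≤ Var |f|`.
-/

open scoped ENNReal

section Variation

variable {α : Type*} [LinearOrder α] {E F : Type*} [PseudoEMetricSpace E] [PseudoEMetricSpace F]

theorem Set.Finite.exists_monotone_range_eq_image_Iic {s : Set α} (hs : s.Finite)
    (hne : s.Nonempty) : ∃ (u : ℕ → α) (n : ℕ), Monotone u ∧ range u = s ∧ u '' Iic n = s := by
  classical
  set t := hs.toFinset
  have ht : 0 < t.card := Finset.card_pos.2 (hs.toFinset_nonempty.2 hne)
  set e := t.orderEmbOfFin rfl
  have he : range e = s := by rw [Finset.range_orderEmbOfFin, hs.coe_toFinset]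
  let u : ℕ → α := fun i => e ⟨min i (t.card - 1), by omega⟩
  have hu : u '' Iic (t.card - 1) = s := by
    rw [← he]; ext x
    simp only [mem_range, mem_image, mem_Iic, u]
    constructor
    · rintro ⟨i, -, rfl⟩; exact ⟨_, rfl⟩
    · rintro ⟨i, rfl⟩; exact ⟨i, by omega, by congr; omega⟩
  refine ⟨u, t.card - 1, fun i j hij => e.monotone (by simp only [Fin.mk_le_mk]; omega),
    (range_subset_iff.2 fun i => he ▸ mem_range_self _).antisymm (hu ▸ image_subset_range _ _), hu⟩

theorem eVariationOn_add_eVariationOn_le {f : α → E} {g : α → F} {s : Set α} {c : ℝ≥0∞}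
    (h : ∀ (n : ℕ) (u : ℕ → α), Monotone u → (∀ i, u i ∈ s) →
      ∑ i ∈ Finset.range n, (edist (f (u (i + 1))) (f (u i)) + edist (g (u (i + 1))) (g (u i)))
        ≤ c) :
    eVariationOn f s + eVariationOn g s ≤ c := by
  rcases s.eq_empty_or_nonempty with rfl | hs
  · simp [eVariationOn.subsingleton]
  have := eVariationOn.nonempty_monotone_mem hs
  refine ENNReal.iSup_add_iSup_le ?_
  rintro ⟨n, u, hu, us⟩ ⟨m, v, hv, vs⟩
  -- `w` enumerates the union of the two partitions in increasing order, so it refines both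
  obtain ⟨w, N, hw, hwt, hwN⟩ := ((finite_Iic n).image u |>.union ((finite_Iic m).image v))
    |>.exists_monotone_range_eq_image_Iic ⟨u 0, .inl ⟨0, Nat.zero_le n, rfl⟩⟩
  have ws : ∀ i, w i ∈ s := by
    have hts : u '' Iic n ∪ v '' Iic m ⊆ s := by
      rintro _ (⟨i, -, rfl⟩ | ⟨i, -, rfl⟩)
      exacts [us i, vs i]
    exact fun i => hts (hwt ▸ mem_range_self i)
  calc (∑ i ∈ Finset.range n, edist (f (u (i + 1))) (f (u i))) +
        ∑ i ∈ Finset.range m, edist (g (v (i + 1))) (g (v i))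
      = eVariationOn f (u '' Iic n) + eVariationOn g (v '' Iic m) := by
        simp only [eVariationOn.image_range_of_monotone _ hu,
          eVariationOn.image_range_of_monotone _ hv, edist_comm]
    _ ≤ eVariationOn f (w '' Iic N) + eVariationOn g (w '' Iic N) := by
        rw [hwN]
        gcongr
        exacts [eVariationOn.mono _ subset_union_left, eVariationOn.mono _ subset_union_right]
    _ ≤ c := by
        simpa only [eVariationOn.image_range_of_monotone _ hw, ← Finset.sum_add_distrib, edist_comm]
          using h N w hw ws

theorem eVariationOn_sub_le {E : Type*} [SeminormedAddCommGroup E] (f g : α → E) (s : Set α) :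
    eVariationOn (f - g) s ≤ eVariationOn f s + eVariationOn g s := by
  refine iSup_le fun ⟨n, u, hu, us⟩ => ?_
  calc ∑ i ∈ Finset.range n, edist ((f - g) (u (i + 1))) ((f - g) (u i))
      ≤ ∑ i ∈ Finset.range n,
          (edist (f (u (i + 1))) (f (u i)) + edist (g (u (i + 1))) (g (u i))) :=
        Finset.sum_le_sum fun i _ => edist_vsub_vsub_le _ _ _ _
    _ ≤ eVariationOn f s + eVariationOn g s := by
        rw [Finset.sum_add_distrib]
        exact add_le_add (eVariationOn.sum_le hu us) (eVariationOn.sum_le hu us)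

theorem tendsto_eVariationOn_of_eventually_le {ι : Type*} {p : Filter ι} {F : ι → α → E}
    {f : α → E} {s : Set α} {U : ι → ℝ≥0∞} (hF : ∀ x ∈ s, Tendsto (fun i => F i x) p (𝓝 (f x)))
    (hU : ∀ᶠ i in p, eVariationOn (F i) s ≤ U i) (hUf : Tendsto U p (𝓝 (eVariationOn f s))) :
    Tendsto (fun i => eVariationOn (F i) s) p (𝓝 (eVariationOn f s)) :=
  tendsto_order.2 ⟨fun _ hv => eVariationOn.lowerSemicontinuous_aux hF hv, fun _ hv =>
    ((hUf.eventually (gt_mem_nhds hv)).and hU).mono fun _ h => h.2.trans_lt h.1⟩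

theorem LipschitzWith.eVariationOn_comp_le {φ : E → F} (hφ : LipschitzWith 1 φ) (f : α → E)
    (s : Set α) : eVariationOn (fun x => φ (f x)) s ≤ eVariationOn f s := by
  simpa [Function.comp_def] using hφ.lipschitzOnWith.comp_eVariationOn_le (mapsTo_univ f s)

end Variation

theorem abs_le_bvNorm {h : ℝ → ℝ} (hh : BVfun h) (x : ℝ) : |h x| ≤ bvNorm h := by
  have hlim : Tendsto (fun y => dist (h x) (h y)) atBot (𝓝 (dist (h x) (limUnder atBot h))) :=
    tendsto_const_nhds.dist hh.tendsto_atBot_limUnder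
  have hdist : dist (h x) (limUnder atBot h) ≤ varOn h univ :=
    le_of_tendsto hlim (.of_forall fun y => hh.dist_le (mem_univ x) (mem_univ y))
  rw [Real.dist_eq] at hdist
  unfold bvNorm
  linarith [abs_sub_abs_le_abs_sub (h x) (limUnder atBot h)]

/-- `sign t * max (|t| - ε) 0` -/
noncomputable def softThreshold (ε t : ℝ) : ℝ := max (t - ε) (min (t + ε) 0)

theorem lipschitzWith_softThreshold (ε : ℝ) : LipschitzWith 1 (softThreshold ε) :=
  .of_dist_le_mul fun x y => by
    simp only [NNReal.coe_one, one_mul, Real.dist_eq, softThreshold]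
    grind

theorem abs_sub_softThreshold_le {ε : ℝ} (hε : 0 ≤ ε) (t : ℝ) : |t - softThreshold ε t| ≤ ε := by
  unfold softThreshold
  grind

/-- For `x`, `y` of opposite signs and both of modulus at least `ε`, each loses exactly `ε`. -/
theorem abs_softThreshold_sub_le (ε x y : ℝ) :
    |softThreshold ε x - softThreshold ε y| ≤ |(|x| - |y|)| ∨
      |softThreshold ε x - softThreshold ε y| + 2 * ε ≤ |x - y| := by
  unfold softThreshold
  grind

theorem abs_abs_sub_abs_add_abs_softThreshold_sub_le {ε x y u v : ℝ} (hu : |u - x| ≤ ε)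
    (hv : |v - y| ≤ ε) :
    |(|u| - |v|)| + |softThreshold ε x - softThreshold ε y| ≤
      |(|x| - |y|)| + |u - x - (v - y)| + |x - y| := by
  have h_near : |(|u| - |v|)| ≤ |x - y| + |u - x - (v - y)| := by
    have := abs_add_le (x - y) (u - x - (v - y))
    rw [show x - y + (u - x - (v - y)) = u - v by ring] at this
    exact (abs_abs_sub_abs_le_abs_sub u v).trans this
  have h_far : |(|u| - |v|)| ≤ |(|x| - |y|)| + 2 * ε := by
    have := abs_sub_le (|u|) (|x|) (|v|)
    have := abs_sub_le (|x|) (|y|) (|v|)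
    grind [abs_abs_sub_abs_le_abs_sub, abs_sub_comm]
  rcases abs_softThreshold_sub_le ε x y with h | h <;> linarith [abs_nonneg (u - x - (v - y))]

theorem eVariationOn_abs_add_softThreshold_le {α : Type*} [LinearOrder α] {f g : α → ℝ} {ε : ℝ}
    (hgf : ∀ x, |g x - f x| ≤ ε) (s : Set α) :
    eVariationOn (fun x => |g x|) s + eVariationOn (fun x => softThreshold ε (f x)) s ≤
      eVariationOn (fun x => |f x|) s + eVariationOn (g - f) s + eVariationOn f s := by
  refine eVariationOn_add_eVariationOn_le fun n u hu us => ?_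
  calc ∑ i ∈ Finset.range n, (edist (|g (u (i + 1))|) (|g (u i)|) +
        edist (softThreshold ε (f (u (i + 1)))) (softThreshold ε (f (u i))))
      ≤ ∑ i ∈ Finset.range n, (edist (|f (u (i + 1))|) (|f (u i)|) +
          edist ((g - f) (u (i + 1))) ((g - f) (u i)) + edist (f (u (i + 1))) (f (u i))) := by
        refine Finset.sum_le_sum fun i _ => ?_
        simp only [edist_dist, Real.dist_eq, Pi.sub_apply]
        rw [← ENNReal.ofReal_add (abs_nonneg _) (abs_nonneg _),
          ← ENNReal.ofReal_add (abs_nonneg _) (abs_nonneg _),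
          ← ENNReal.ofReal_add (by positivity) (abs_nonneg _)]
        exact ENNReal.ofReal_le_ofReal <| abs_abs_sub_abs_add_abs_softThreshold_sub_le
          (hgf (u (i + 1))) (hgf (u i))
    _ ≤ _ := by
        simp only [Finset.sum_add_distrib]
        gcongr <;> exact eVariationOn.sum_le hu us

theorem tendsto_eVariationOn_abs {f : ℝ → ℝ} (hf : BVfun f) {fj : ℕ → ℝ → ℝ}
    (hfj : ∀ j, BVfun (fj j)) (hconv : Tendsto (fun j => bvNorm (fj j - f)) atTop (𝓝 0))
    (s : Set ℝ) :
    Tendsto (fun j => eVariationOn (fun x => |fj j x|) s) atTop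
      (𝓝 (eVariationOn (fun x => |f x|) s)) := by
  set ε := fun j => bvNorm (fj j - f)
  have hbv_sub (j : ℕ) : BVfun (fj j - f) :=
    ne_top_of_le_ne_top (ENNReal.add_ne_top.2 ⟨hfj j, hf⟩) (eVariationOn_sub_le _ _ _)
  have hclose (j : ℕ) (x : ℝ) : |fj j x - f x| ≤ ε j := abs_le_bvNorm (hbv_sub j) x
  have tendsto_of_close {u : ℕ → ℝ} {c : ℝ} (h : ∀ j, |u j - c| ≤ ε j) :
      Tendsto u atTop (𝓝 c) :=
    tendsto_iff_dist_tendsto_zero.2 (squeeze_zero (fun _ => dist_nonneg) h hconv)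
  have hf_s : eVariationOn f s ≠ ⊤ :=
    ne_top_of_le_ne_top hf (eVariationOn.mono _ (subset_univ s))
  have hsub : Tendsto (fun j => eVariationOn (fj j - f) s) atTop (𝓝 0) := by
    refine tendsto_of_tendsto_of_tendsto_of_le_of_le tendsto_const_nhds
      (ENNReal.ofReal_zero ▸ ENNReal.tendsto_ofReal hconv) (fun _ => bot_le) fun j => ?_
    calc eVariationOn (fj j - f) s ≤ eVariationOn (fj j - f) univ :=
          eVariationOn.mono _ (subset_univ s)
      _ = ENNReal.ofReal (varOn (fj j - f) univ) := (ENNReal.ofReal_toReal (hbv_sub j)).symm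
      _ ≤ ENNReal.ofReal (ε j) :=
          ENNReal.ofReal_le_ofReal (le_add_of_nonneg_left (abs_nonneg _))
  have hthreshold : Tendsto (fun j => eVariationOn (fun x => softThreshold (ε j) (f x)) s) atTop
      (𝓝 (eVariationOn f s)) :=
    tendsto_eVariationOn_of_eventually_le
      (fun x _ => tendsto_of_close fun j => abs_sub_comm (f x) _ ▸
        abs_sub_softThreshold_le ((abs_nonneg _).trans (hclose j x)) (f x))
      (.of_forall fun j => (lipschitzWith_softThreshold _).eVariationOn_comp_le f s)
      tendsto_const_nhds
  refine tendsto_eVariationOn_of_eventually_le (fun x _ => (tendsto_of_close (hclose · x)).abs)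
    (.of_forall fun j => ENNReal.le_sub_of_add_le_right
      (ne_top_of_le_ne_top hf_s ((lipschitzWith_softThreshold _).eVariationOn_comp_le f s))
      (eVariationOn_abs_add_softThreshold_le (hclose j) s)) ?_
  convert ENNReal.Tendsto.sub ((tendsto_const_nhds.add hsub).add tendsto_const_nhds) hthreshold
    (.inr hf_s) using 2
  rw [add_zero, ENNReal.add_sub_cancel_right hf_s]

theorem stmt4_general (f : ℝ → ℝ) (hf : BVfun f) (fj : ℕ → ℝ → ℝ) (hfj : ∀ j, BVfun (fj j))
    (hconv : Tendsto (fun j => bvNorm (fj j - f)) atTop (𝓝 0))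
    (a b : EReal) :
    Tendsto (fun j => varOn (fun x => |fj j x|) (erealIoo a b)) atTop
      (𝓝 (varOn (fun x => |f x|) (erealIoo a b))) := by
  have hf_abs : eVariationOn (fun x => |f x|) (erealIoo a b) ≠ ⊤ :=
    ne_top_of_le_ne_top hf <| ((lipschitzWith_one_norm (E := ℝ)).eVariationOn_comp_le f _).trans
      (eVariationOn.mono f (subset_univ _))
  exact (ENNReal.tendsto_toReal hf_abs).comp (tendsto_eVariationOn_abs hf hfj hconv _)

theorem stmt4 (f : ℝ → ℝ) (hf : BVfun f) (fj : ℕ → ℝ → ℝ) (hfj : ∀ j, BVfun (fj j))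
    (hconv : Tendsto (fun j => bvNorm (fj j - f)) atTop (𝓝 0))
    (a b : EReal) (hab : a < b) :
    Tendsto (fun j => varOn (fun x => |fj j x|) (erealIoo a b)) atTop
      (𝓝 (varOn (fun x => |f x|) (erealIoo a b))) :=
  stmt4_general f hf fj hfj hconv a b
end

section
/- Let f ∈ BV(ℝ), x ∈ ℝ, and suppose M̃f(x) > |f|‾(x) and M̃f(x) > lim_{y→∞} M̃f(y). Then there exists a bounded closed interval [a,b] ∋ x with a < b such that (1/(b−a))∫_a^b |f| = M̃f(x); moreover either (1/(x−a))∫_a^x |f| = M̃f(x) or (1/(b−x))∫_x^b |f| = M̃f(x) (here if a = x or b = x, interpret the corresponding degenerate option as not occurring). -/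
/-!
An interval around `x` whose average of `|f|` exceeds a level `c` strictly between
`max (|f|‾(x), L)` and `M̃f(x)` cannot be too short (as `|f|‾(x) < c`), cannot reach far to the
right (as `M̃f < c` near `+∞`), and cannot reach far to the left (its average then approaches the
limit of `|f|` at `-∞`, which is at most `L`). So the supremum defining `M̃f(x)` is that of the
continuous function `(a, b) ↦ ⨍_a^b |f|` on a compact set of endpoints, and is attained. If
neither `[a, x]` nor `[x, b]` attained it, the average over `[a, b]`, a convex combination of the
two, would fall short as well.
-/

open MeasureTheory Filter Set Topology

theorem BoundedVariationOn.abs_le {α : Type*} [LinearOrder α] {f : α → ℝ} {s : Set α}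
    (hf : BoundedVariationOn f s) {a t : α} (ha : a ∈ s) (ht : t ∈ s) :
    |f t| ≤ |f a| + (eVariationOn f s).toReal := by
  have := hf.dist_le ht ha
  rw [Real.dist_eq] at this
  linarith [abs_sub_abs_le_abs_sub (f t) (f a)]

theorem LocallyBoundedVariationOn.locallyIntegrable {f : ℝ → ℝ}
    (hf : LocallyBoundedVariationOn f univ) : LocallyIntegrable f := by
  obtain ⟨p, q, hp, hq, rfl⟩ := hf.exists_monotoneOn_sub_monotoneOn
  exact (monotoneOn_univ.1 hp).locallyIntegrable.sub (monotoneOn_univ.1 hq).locallyIntegrable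

theorem MeasureTheory.LocallyIntegrable.intervalIntegrable_abs {f : ℝ → ℝ}
    (hf : LocallyIntegrable f) (a b : ℝ) : IntervalIntegrable (fun t => |f t|) volume a b :=
  (hf.integrableOn_isCompact isCompact_uIcc).intervalIntegrable.abs

theorem tendsto_sub_atBot_atTop (b : ℝ) : Tendsto (fun a : ℝ => b - a) atBot atTop := by
  simpa [sub_eq_add_neg] using tendsto_atTop_add_const_left _ b tendsto_neg_atBot_atTop

theorem tendsto_integral_div_atBot {g : ℝ → ℝ} (hg : ∀ a b, IntervalIntegrable g volume a b)
    {l : ℝ} (hl : Tendsto g atBot (𝓝 l)) (b : ℝ) :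
    Tendsto (fun a => (∫ t in a..b, g t) / (b - a)) atBot (𝓝 l) := by
  suffices h₀ : Tendsto (fun a => (∫ t in a..b, (g t - l)) / (b - a)) atBot (𝓝 0) by
    refine (zero_add l ▸ h₀.add_const l).congr' ?_
    filter_upwards [eventually_lt_atBot b] with a hab
    rw [intervalIntegral.integral_sub (hg a b) intervalIntegrable_const,
      intervalIntegral.integral_const, smul_eq_mul, sub_div, mul_div_cancel_left₀ _ (by linarith)]
    ring
  refine Metric.tendsto_nhds.2 fun ε hε => ?_
  obtain ⟨T, hT⟩ := eventually_atBot.1 (Metric.tendsto_nhds.1 hl (ε / 2) (half_pos hε))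
  set T' := min T b
  set K := |∫ t in T'..b, (g t - l)|
  have hK : Tendsto (fun a => K / (b - a)) atBot (𝓝 0) :=
    tendsto_const_nhds.div_atTop (tendsto_sub_atBot_atTop b)
  filter_upwards [eventually_lt_atBot T', hK.eventually (gt_mem_nhds (half_pos hε))]
    with a haT hKa
  have hab : 0 < b - a := by linarith [min_le_right T b]
  have hhead : ‖∫ t in a..T', (g t - l)‖ ≤ ε / 2 * |T' - a| := by
    refine intervalIntegral.norm_integral_le_of_norm_le_const fun t ht => ?_
    rw [uIoc_of_le haT.le] at ht
    exact (hT t (ht.2.trans (min_le_left T b))).le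
  rw [Real.norm_eq_abs, abs_of_pos (sub_pos.2 haT)] at hhead
  have hint : ∀ u v, IntervalIntegrable (fun t => g t - l) volume u v :=
    fun u v => (hg u v).sub intervalIntegrable_const
  rw [Real.dist_eq, sub_zero, abs_div, abs_of_pos hab, div_lt_iff₀ hab,
    ← intervalIntegral.integral_add_adjacent_intervals (hint a T') (hint T' b)]
  rw [div_lt_iff₀ hab] at hKa
  calc _ ≤ |∫ t in a..T', (g t - l)| + K := abs_add_le _ _
    _ < ε / 2 * (T' - a) + ε / 2 * (b - a) := by linarith
    _ ≤ ε * (b - a) := by nlinarith [min_le_right T b]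

theorem IsCompact.exists_isMaxOn_of_superlevel_subset {X β : Type*} [TopologicalSpace X]
    [LinearOrder β] [TopologicalSpace β] [ClosedIciTopology β]
    {F : X → β} {A K : Set X} {c : β}
    (hK : IsCompact K) (hKA : K ⊆ A) (hF : ContinuousOn F K)
    (hmem : ∀ p ∈ A, c < F p → p ∈ K) (hex : ∃ p ∈ A, c < F p) :
    ∃ p ∈ A, IsMaxOn F A p := by
  obtain ⟨q, hqA, hq⟩ := hex
  obtain ⟨p, hpK, hp⟩ := hK.exists_isMaxOn ⟨q, hmem q hqA hq⟩ hF
  refine ⟨p, hKA hpK, isMaxOn_iff.2 fun r hrA => ?_⟩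
  by_cases hr : c < F r
  · exact hp (hmem r hrA hr)
  · exact (not_lt.1 hr).trans (hq.le.trans (hp (hmem q hqA hq)))

section Averages

variable {f : ℝ → ℝ} {a b x C : ℝ}

theorem integral_abs_eq_mAvg_mul (hab : a ≠ b) : ∫ t in a..b, |f t| = mAvg f a b * (b - a) := by
  rw [mAvg, div_mul_cancel₀ _ (sub_ne_zero.2 hab.symm)]

theorem mAvg_le_of_abs_le (hC : ∀ t, |f t| ≤ C) (hab : a < b) : mAvg f a b ≤ C := by
  rw [mAvg, div_le_iff₀ (sub_pos.2 hab)]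
  calc (∫ t in a..b, |f t|) ≤ ‖∫ t in a..b, |f t|‖ := le_abs_self _
    _ ≤ C * |b - a| :=
      intervalIntegral.norm_integral_le_of_norm_le_const fun t _ => by simpa using hC t
    _ = C * (b - a) := by rw [abs_of_pos (sub_pos.2 hab)]

theorem mAvg_le_uMax (hC : ∀ t, |f t| ≤ C) (hab : a < b) (hax : a ≤ x) (hxb : x ≤ b) :
    mAvg f a b ≤ uMax f x :=
  le_csSup ⟨C, by rintro _ ⟨a, b, hab, -, -, rfl⟩; exact mAvg_le_of_abs_le hC hab⟩
    ⟨a, b, hab, hax, hxb, rfl⟩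

theorem exists_pos_mAvg_lt_of_ubar_lt (hC : ∀ t, |f t| ≤ C) {c : ℝ} (h : ubar f x < c) :
    ∃ δ > 0, ∀ a b, a < b → a ≤ x → x ≤ b → b - a ≤ δ → mAvg f a b < c := by
  have : Nonempty {h : ℝ // 0 < h} := ⟨⟨1, one_pos⟩⟩
  obtain ⟨⟨δ, hδ⟩, hlt⟩ := exists_lt_of_ciInf_lt h
  refine ⟨δ, hδ, fun a b hab hax hxb hlen => lt_of_le_of_lt ?_ hlt⟩
  exact le_csSup ⟨C, by rintro _ ⟨a, b, hab, -, -, -, rfl⟩; exact mAvg_le_of_abs_le hC hab⟩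
    ⟨a, b, hab, hax, hxb, hlen, rfl⟩

theorem mAvg_lt_of_lt_of_lt (hf : LocallyIntegrable f) {c : ℝ} (hax : a < x) (hxb : x < b)
    (h₁ : mAvg f a x < c) (h₂ : mAvg f x b < c) : mAvg f a b < c := by
  rw [mAvg, div_lt_iff₀ (by linarith), ← intervalIntegral.integral_add_adjacent_intervals
    (hf.intervalIntegrable_abs a x) (hf.intervalIntegrable_abs x b),
    integral_abs_eq_mAvg_mul hax.ne, integral_abs_eq_mAvg_mul hxb.ne]
  nlinarith [mul_lt_mul_of_pos_right h₁ (sub_pos.2 hax),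
    mul_lt_mul_of_pos_right h₂ (sub_pos.2 hxb)]

theorem mAvg_le_mAvg_add_div (hC : ∀ t, |f t| ≤ C) (hf : LocallyIntegrable f) (hax : a < x)
    (hxb : x ≤ b) : mAvg f a b ≤ mAvg f a x + C * (b - x) / (x - a) := by
  have htail : ‖∫ t in x..b, |f t|‖ ≤ C * |b - x| :=
    intervalIntegral.norm_integral_le_of_norm_le_const fun t _ => by simpa using hC t
  rw [Real.norm_eq_abs, abs_of_nonneg (sub_nonneg.2 hxb)] at htail
  have hnonneg : 0 ≤ ∫ t in a..b, |f t| :=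
    intervalIntegral.integral_nonneg (by linarith) fun t _ => abs_nonneg (f t)
  calc mAvg f a b ≤ (∫ t in a..b, |f t|) / (x - a) :=
        div_le_div_of_nonneg_left hnonneg (sub_pos.2 hax) (by linarith)
    _ = ((∫ t in a..x, |f t|) + ∫ t in x..b, |f t|) / (x - a) := by
        rw [intervalIntegral.integral_add_adjacent_intervals (hf.intervalIntegrable_abs a x)
          (hf.intervalIntegrable_abs x b)]
    _ ≤ ((∫ t in a..x, |f t|) + C * (b - x)) / (x - a) := by
        gcongr; exact (le_abs_self _).trans htail
    _ = mAvg f a x + C * (b - x) / (x - a) := add_div _ _ _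

theorem continuousOn_mAvg (hf : LocallyIntegrable f) :
    ContinuousOn (fun p : ℝ × ℝ => mAvg f p.1 p.2) {p | p.1 ≠ p.2} := by
  have hG := intervalIntegral.continuous_primitive hf.intervalIntegrable_abs 0
  have hprim : ∀ p : ℝ × ℝ, mAvg f p.1 p.2 =
      ((∫ t in 0..p.2, |f t|) - ∫ t in 0..p.1, |f t|) / (p.2 - p.1) := fun p => by
    rw [mAvg, intervalIntegral.integral_interval_sub_left (hf.intervalIntegrable_abs 0 p.2)
      (hf.intervalIntegrable_abs 0 p.1)]
  simp_rw [hprim]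
  exact ((hG.comp continuous_snd).sub (hG.comp continuous_fst)).continuousOn.div
    (continuous_snd.sub continuous_fst).continuousOn fun p hp => sub_ne_zero.2 (Ne.symm hp)

variable {l : ℝ} (hC : ∀ t, |f t| ≤ C) (hf : LocallyIntegrable f)
  (hl : Tendsto (fun t => |f t|) atBot (𝓝 l))
include hC hf hl

theorem le_uMax_of_tendsto_atBot_s14 (y : ℝ) : l ≤ uMax f y :=
  le_of_tendsto (tendsto_integral_div_atBot hf.intervalIntegrable_abs hl y)
    (by filter_upwards [eventually_lt_atBot y] with a ha using mAvg_le_uMax hC ha ha.le le_rfl)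

theorem eventually_atBot_mAvg_lt {c : ℝ} (hlc : l < c) (x R : ℝ) :
    ∀ᶠ a in atBot, ∀ b ∈ Icc x R, mAvg f a b < c := by
  have hbound : Tendsto (fun a => mAvg f a x + C * (R - x) / (x - a)) atBot (𝓝 (l + 0)) :=
    (tendsto_integral_div_atBot hf.intervalIntegrable_abs hl x).add
      (tendsto_const_nhds.div_atTop (tendsto_sub_atBot_atTop x))
  have hC₀ : 0 ≤ C := (abs_nonneg _).trans (hC 0)
  filter_upwards [hbound.eventually (gt_mem_nhds (by simpa using hlc)), eventually_lt_atBot x]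
    with a ha hax b ⟨hxb, hbR⟩
  calc mAvg f a b ≤ mAvg f a x + C * (b - x) / (x - a) := mAvg_le_mAvg_add_div hC hf hax hxb
    _ ≤ mAvg f a x + C * (R - x) / (x - a) := by gcongr
    _ < c := ha

end Averages

theorem exists_mAvg_eq_uMax {f : ℝ → ℝ} {C l L x : ℝ} (hC : ∀ t, |f t| ≤ C)
    (hf : LocallyIntegrable f) (hl : Tendsto (fun t => |f t|) atBot (𝓝 l))
    (hL : Tendsto (uMax f) atTop (𝓝 L)) (h₁ : ubar f x < uMax f x) (h₂ : L < uMax f x) :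
    ∃ a b, a < b ∧ a ≤ x ∧ x ≤ b ∧ mAvg f a b = uMax f x := by
  obtain ⟨c, hc, hcS⟩ := exists_between (max_lt h₁ h₂)
  unfold uMax at hcS ⊢
  have hlL : l ≤ L := ge_of_tendsto' hL (le_uMax_of_tendsto_atBot_s14 hC hf hl)
  -- An interval around `x` whose average exceeds `c` is not too short and has bounded endpoints.
  obtain ⟨δ, hδ, hshort⟩ := exists_pos_mAvg_lt_of_ubar_lt hC ((le_max_left _ _).trans_lt hc)
  obtain ⟨R, hR⟩ := eventually_atTop.1
    (hL.eventually (gt_mem_nhds ((le_max_right _ _).trans_lt hc)))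
  obtain ⟨M, hM⟩ := eventually_atBot.1
    (eventually_atBot_mAvg_lt hC hf hl (hlL.trans_lt ((le_max_right _ _).trans_lt hc)) x R)
  set A := {p : ℝ × ℝ | p.1 < p.2 ∧ p.1 ≤ x ∧ x ≤ p.2}
  set K := (Icc M x ×ˢ Icc x R) ∩ {p : ℝ × ℝ | δ ≤ p.2 - p.1}
  have hK : IsCompact K := (isCompact_Icc.prod isCompact_Icc).inter_right
    (isClosed_le continuous_const (continuous_snd.sub continuous_fst))
  have hKA : K ⊆ A := by
    rintro p ⟨⟨⟨-, hpx⟩, hxp, -⟩, hlen : δ ≤ p.2 - p.1⟩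
    exact ⟨by linarith, hpx, hxp⟩
  have hmem : ∀ p ∈ A, c < mAvg f p.1 p.2 → p ∈ K := by
    rintro ⟨a, b⟩ ⟨hab, hax, hxb⟩ hcp
    have hbR : b ≤ R := by
      by_contra! hRb
      exact (hR b hRb.le).not_ge (hcp.le.trans (mAvg_le_uMax hC hab hab.le le_rfl))
    have hMa : M ≤ a := by
      by_contra! haM
      exact (hM a haM.le b ⟨hxb, hbR⟩).not_ge hcp.le
    have hδa : δ ≤ b - a := by
      by_contra! hba
      exact (hshort a b hab hax hxb hba.le).not_ge hcp.le
    exact ⟨⟨⟨hMa, hax⟩, hxb, hbR⟩, hδa⟩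
  have hex : ∃ p ∈ A, c < mAvg f p.1 p.2 := by
    obtain ⟨_, ⟨a, b, hab, hax, hxb, rfl⟩, hcab⟩ := exists_lt_of_lt_csSup
      (by exact ⟨_, x - 1, x, by linarith, by linarith, le_rfl, rfl⟩) hcS
    exact ⟨(a, b), ⟨hab, hax, hxb⟩, hcab⟩
  obtain ⟨p, ⟨hp, hpx, hxp⟩, hmax⟩ := hK.exists_isMaxOn_of_superlevel_subset hKA
    ((continuousOn_mAvg hf).mono fun q hq => (hKA hq).1.ne) hmem hex
  refine ⟨p.1, p.2, hp, hpx, hxp,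
    Eq.symm (IsGreatest.csSup_eq ⟨⟨p.1, p.2, hp, hpx, hxp, rfl⟩, ?_⟩)⟩
  rintro _ ⟨a, b, hab, hax, hxb, rfl⟩
  exact hmax (show (a, b) ∈ A from ⟨hab, hax, hxb⟩)

theorem stmt14 (f : ℝ → ℝ) (hf : BVfun f) (x : ℝ)
    (L : ℝ) (hL : Tendsto (uMax f) atTop (𝓝 L))
    (h1 : ubar f x < uMax f x) (h2 : L < uMax f x) :
    ∃ a b : ℝ, a ≤ x ∧ x ≤ b ∧ a < b ∧ mAvg f a b = uMax f x ∧
      ((a < x ∧ mAvg f a x = uMax f x) ∨ (x < b ∧ mAvg f x b = uMax f x)) := by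
  have hbv : BoundedVariationOn f univ := hf
  have hC : ∀ t, |f t| ≤ |f 0| + (eVariationOn f univ).toReal :=
    fun t => hbv.abs_le (mem_univ 0) (mem_univ t)
  have hfi := hbv.locallyBoundedVariationOn.locallyIntegrable
  obtain ⟨a, b, hab, hax, hxb, hS⟩ :=
    exists_mAvg_eq_uMax hC hfi hbv.tendsto_atBot_limUnder.abs hL h1 h2
  refine ⟨a, b, hax, hxb, hab, hS, ?_⟩
  rcases hax.eq_or_lt with rfl | hax'
  · exact Or.inr ⟨hab, hS⟩
  rcases hxb.eq_or_lt with rfl | hxb'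
  · exact Or.inl ⟨hab, hS⟩
  by_contra! hne
  exact (mAvg_lt_of_lt_of_lt hfi hax' hxb'
    ((mAvg_le_uMax hC hax' hax'.le le_rfl).lt_of_ne (hne.1 hax'))
    ((mAvg_le_uMax hC hxb' le_rfl hxb'.le).lt_of_ne (hne.2 hxb'))).ne hS
end
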